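/- Let λ and μ be finite positive Radon measures on the unit sphere S^{N-1} ⊂ ℝ^N, and let ν be a finite positive Radon measure on ℝ^N with ν({0}) = 0. Suppose ∫_{S^{N-1}} |ξ·σ|² dλ(σ) = (1/2)∫_{S^{N-1}} |ξ·σ|² dμ(σ) + ∫_{ℝ^N} (1 - cos(z·ξ))/|z|² dν(z) for every ξ ∈ ℝ^N. Then ∫_{S^{N-1}} |ξ·σ|² dλ(σ) = (1/2)∫_{S^{N-1}} |ξ·σ|² dμ(σ) for all ξ, and ν = 0. -/

import Mathlib

/-!
Both quadratic integrals are homogeneous of degree 2 in `ξ`, hence so is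
`F ξ = ∫ (1 - cos ⟪z, ξ⟫) / ‖z‖² dν`. But `F (c • ξ) / c²` tends to `0` as `c → ∞` by dominated
convergence: the integrand divided by `c²` is at most `‖ξ‖² / 2` and at most `2 / (c² ‖z‖²)`.
So `F = 0`, and a nonnegative integrand that is continuous in `ξ` and not identically zero for
`z ≠ 0` then forces `ν = 0`.
-/
open MeasureTheory Filter Topology
open scoped RealInnerProductSpace

variable {E : Type*} [NormedAddCommGroup E] [InnerProductSpace ℝ E]

lemma one_sub_cos_inner_div_sq_nonneg (z ξ : E) : 0 ≤ (1 - Real.cos ⟪z, ξ⟫) / ‖z‖ ^ 2 :=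
  div_nonneg (sub_nonneg.2 (Real.cos_le_one _)) (by positivity)

lemma one_sub_cos_inner_div_sq_le_two_div (z ξ : E) :
    (1 - Real.cos ⟪z, ξ⟫) / ‖z‖ ^ 2 ≤ 2 / ‖z‖ ^ 2 :=
  div_le_div_of_nonneg_right (by linarith [Real.neg_one_le_cos ⟪z, ξ⟫]) (by positivity)

lemma one_sub_cos_inner_div_sq_le (z ξ : E) :
    (1 - Real.cos ⟪z, ξ⟫) / ‖z‖ ^ 2 ≤ ‖ξ‖ ^ 2 / 2 := by
  rcases eq_or_ne z 0 with rfl | hz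
  · simp only [inner_zero_left, Real.cos_zero, sub_self, zero_div]
    positivity
  rw [div_le_iff₀ (by positivity)]
  have hinner : ⟪z, ξ⟫ ^ 2 ≤ (‖z‖ * ‖ξ‖) ^ 2 := by
    rw [← sq_abs]
    exact pow_le_pow_left₀ (abs_nonneg _) (abs_real_inner_le_norm z ξ) 2
  calc 1 - Real.cos ⟪z, ξ⟫ ≤ ⟪z, ξ⟫ ^ 2 / 2 := by
        linarith [Real.one_sub_sq_div_two_le_cos (x := ⟪z, ξ⟫)]
    _ ≤ ‖ξ‖ ^ 2 / 2 * ‖z‖ ^ 2 := by nlinarith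

section Measure

variable [MeasurableSpace E] [BorelSpace E]

lemma measurable_one_sub_cos_inner_div_sq (ξ : E) :
    Measurable fun z : E => (1 - Real.cos ⟪z, ξ⟫) / ‖z‖ ^ 2 := by
  fun_prop

lemma integrable_one_sub_cos_inner_div_sq (ν : Measure E) [IsFiniteMeasure ν] (ξ : E) :
    Integrable (fun z => (1 - Real.cos ⟪z, ξ⟫) / ‖z‖ ^ 2) ν :=
  Integrable.mono' (integrable_const (‖ξ‖ ^ 2 / 2))
    (measurable_one_sub_cos_inner_div_sq ξ).aestronglyMeasurable <| .of_forall fun z => by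
      rw [Real.norm_of_nonneg (one_sub_cos_inner_div_sq_nonneg z ξ)]
      exact one_sub_cos_inner_div_sq_le z ξ

lemma integral_one_sub_cos_inner_div_sq_eq_zero_of_homogeneous (ν : Measure E)
    [IsFiniteMeasure ν]
    (hhom : ∀ (c : ℝ) (ξ : E), ∫ z, (1 - Real.cos ⟪z, c • ξ⟫) / ‖z‖ ^ 2 ∂ν =
      c ^ 2 * ∫ z, (1 - Real.cos ⟪z, ξ⟫) / ‖z‖ ^ 2 ∂ν) (ξ : E) :
    ∫ z, (1 - Real.cos ⟪z, ξ⟫) / ‖z‖ ^ 2 ∂ν = 0 := by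
  set F : ℝ → E → ℝ := fun c z => (c ^ 2)⁻¹ * ((1 - Real.cos ⟪z, c • ξ⟫) / ‖z‖ ^ 2)
  have hpos : ∀ᶠ c : ℝ in atTop, c ≠ 0 := eventually_ne_atTop 0
  have hint : ∀ᶠ c in atTop, ∫ z, F c z ∂ν = ∫ z, (1 - Real.cos ⟪z, ξ⟫) / ‖z‖ ^ 2 ∂ν := by
    filter_upwards [hpos] with c hc
    rw [integral_const_mul, hhom, inv_mul_cancel_left₀ (pow_ne_zero 2 hc)]
  have hinv : Tendsto (fun c : ℝ => (c ^ 2)⁻¹) atTop (𝓝 0) :=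
    tendsto_inv_atTop_zero.comp (tendsto_pow_atTop two_ne_zero)
  have hlim : Tendsto (fun c => ∫ z, F c z ∂ν) atTop (𝓝 (∫ _z, (0 : ℝ) ∂ν)) := by
    refine tendsto_integral_filter_of_dominated_convergence (fun _ => ‖ξ‖ ^ 2 / 2)
      (.of_forall fun _ =>
        ((measurable_one_sub_cos_inner_div_sq _).const_mul _).aestronglyMeasurable)
      ?_ (integrable_const _) (.of_forall fun z => ?_)
    · filter_upwards [hpos] with c hc
      refine .of_forall fun z => ?_
      rw [Real.norm_of_nonneg (mul_nonneg (by positivity) (one_sub_cos_inner_div_sq_nonneg _ _)),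
        inv_mul_le_iff₀ (by positivity)]
      calc _ ≤ ‖c • ξ‖ ^ 2 / 2 := one_sub_cos_inner_div_sq_le z (c • ξ)
        _ = c ^ 2 * (‖ξ‖ ^ 2 / 2) := by rw [norm_smul, mul_pow, Real.norm_eq_abs, sq_abs]; ring
    · have hbound := (hinv.mul_const (2 / ‖z‖ ^ 2)).trans (by rw [zero_mul])
      exact squeeze_zero
        (fun _ => mul_nonneg (by positivity) (one_sub_cos_inner_div_sq_nonneg _ _))
        (fun _ => mul_le_mul_of_nonneg_left (one_sub_cos_inner_div_sq_le_two_div z _)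
          (by positivity))
        hbound
  rw [integral_zero] at hlim
  exact tendsto_nhds_unique (tendsto_const_nhds.congr' (hint.mono fun _ h => h.symm)) hlim

/-- For `z ≠ 0` the integrand is continuous in `ξ` and equals `2 / ‖z‖²` at `ξ = (π / ‖z‖²) • z`,
so it cannot vanish on a countable dense set of `ξ`. -/
lemma measure_eq_zero_of_integral_one_sub_cos_inner_div_sq_eq_zero
    [TopologicalSpace.SeparableSpace E] (ν : Measure E) [IsFiniteMeasure ν] (hν0 : ν {0} = 0)
    (hzero : ∀ ξ : E, ∫ z, (1 - Real.cos ⟪z, ξ⟫) / ‖z‖ ^ 2 ∂ν = 0) : ν = 0 := by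
  obtain ⟨D, hD_countable, hD_dense⟩ := TopologicalSpace.exists_countable_dense E
  have hae : ∀ᵐ z ∂ν, ∀ ξ ∈ D, (1 - Real.cos ⟪z, ξ⟫) / ‖z‖ ^ 2 = 0 := by
    refine (ae_ball_iff hD_countable).2 fun ξ _ => ?_
    exact (integral_eq_zero_iff_of_nonneg (fun z => one_sub_cos_inner_div_sq_nonneg z ξ)
      (integrable_one_sub_cos_inner_div_sq ν ξ)).1 (hzero ξ)
  have hne : ∀ᵐ z ∂ν, z ≠ 0 := measure_eq_zero_iff_ae_notMem.1 hν0
  have hfalse : ∀ᵐ z ∂ν, False := by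
    filter_upwards [hae, hne] with z hz hz0
    have hcont : Continuous fun ξ : E => (1 - Real.cos ⟪z, ξ⟫) / ‖z‖ ^ 2 := by fun_prop
    have hvanish :=
      congrFun (hcont.ext_on hD_dense continuous_const hz) ((Real.pi / ‖z‖ ^ 2) • z)
    have hnorm : ‖z‖ ^ 2 ≠ 0 := by positivity
    rw [real_inner_smul_right, real_inner_self_eq_norm_sq, div_mul_cancel₀ _ hnorm,
      Real.cos_pi, div_eq_zero_iff] at hvanish
    exact hvanish.elim (by norm_num) hnorm
  exact ae_eq_bot.1 (eventually_false_iff_eq_bot.1 hfalse)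

end Measure

lemma integral_inner_smul_sq {α : Type*} [MeasurableSpace α] (κ : Measure α) (v : α → E)
    (c : ℝ) (ξ : E) : ∫ σ, ⟪c • ξ, v σ⟫ ^ 2 ∂κ = c ^ 2 * ∫ σ, ⟪ξ, v σ⟫ ^ 2 ∂κ := by
  rw [← integral_const_mul]
  simp only [real_inner_smul_left, mul_pow]

theorem stmt13_general {N : ℕ}
    (lam mu : Measure (Metric.sphere (0 : EuclideanSpace ℝ (Fin N)) 1))
    (ν : Measure (EuclideanSpace ℝ (Fin N))) [IsFiniteMeasure ν]
    (hν0 : ν {0} = 0)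
    (h : ∀ ξ : EuclideanSpace ℝ (Fin N),
      ∫ σ, (inner ℝ ξ (σ : EuclideanSpace ℝ (Fin N)) : ℝ) ^ 2 ∂lam =
        (1 / 2) * ∫ σ, (inner ℝ ξ (σ : EuclideanSpace ℝ (Fin N)) : ℝ) ^ 2 ∂mu +
          ∫ z, (1 - Real.cos (inner ℝ z ξ)) / ‖z‖ ^ 2 ∂ν) :
    (∀ ξ : EuclideanSpace ℝ (Fin N),
      ∫ σ, (inner ℝ ξ (σ : EuclideanSpace ℝ (Fin N)) : ℝ) ^ 2 ∂lam =
        (1 / 2) * ∫ σ, (inner ℝ ξ (σ : EuclideanSpace ℝ (Fin N)) : ℝ) ^ 2 ∂mu) ∧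
      ν = 0 := by
  have hhom (c : ℝ) (ξ : EuclideanSpace ℝ (Fin N)) :
      ∫ z, (1 - Real.cos (inner ℝ z (c • ξ))) / ‖z‖ ^ 2 ∂ν =
        c ^ 2 * ∫ z, (1 - Real.cos (inner ℝ z ξ)) / ‖z‖ ^ 2 ∂ν := by
    have hc := h (c • ξ)
    rw [integral_inner_smul_sq, integral_inner_smul_sq] at hc
    linear_combination -hc + c ^ 2 * h ξ
  have hzero := integral_one_sub_cos_inner_div_sq_eq_zero_of_homogeneous ν hhom
  exact ⟨fun ξ => by simpa [hzero ξ] using h ξ,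
    measure_eq_zero_of_integral_one_sub_cos_inner_div_sq_eq_zero ν hν0 hzero⟩

/-- If finite positive measures `λ`, `μ` on `S^{N-1}` and a finite positive measure `ν` on
`ℝ^N` with `ν {0} = 0` satisfy
`∫ |ξ·σ|² dλ = (1/2)∫ |ξ·σ|² dμ + ∫ (1-cos(z·ξ))/|z|² dν` for all `ξ`, then
`∫ |ξ·σ|² dλ = (1/2)∫ |ξ·σ|² dμ` for all `ξ` and `ν = 0`. -/
theorem stmt13 {N : ℕ}
    (lam mu : Measure (Metric.sphere (0 : EuclideanSpace ℝ (Fin N)) 1))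
    [IsFiniteMeasure lam] [IsFiniteMeasure mu]
    (ν : Measure (EuclideanSpace ℝ (Fin N))) [IsFiniteMeasure ν]
    (hν0 : ν {0} = 0)
    (h : ∀ ξ : EuclideanSpace ℝ (Fin N),
      ∫ σ, (inner ℝ ξ (σ : EuclideanSpace ℝ (Fin N)) : ℝ) ^ 2 ∂lam =
        (1 / 2) * ∫ σ, (inner ℝ ξ (σ : EuclideanSpace ℝ (Fin N)) : ℝ) ^ 2 ∂mu +
          ∫ z, (1 - Real.cos (inner ℝ z ξ)) / ‖z‖ ^ 2 ∂ν) :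
    (∀ ξ : EuclideanSpace ℝ (Fin N),
      ∫ σ, (inner ℝ ξ (σ : EuclideanSpace ℝ (Fin N)) : ℝ) ^ 2 ∂lam =
        (1 / 2) * ∫ σ, (inner ℝ ξ (σ : EuclideanSpace ℝ (Fin N)) : ℝ) ^ 2 ∂mu) ∧
      ν = 0 :=
  stmt13_general lam mu ν hν0 h
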